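/- arXiv:2411.10352 — 2 statements merged into one kernel-verified Lean document; each statement's English description precedes it below -/
import Mathlib

section
/- Let p ≥ 1 and for k ∈ {1,…,p−1} define f(k) = −(p−1) + (p−k)/k. Then max over unit vectors v of the Ricci curvature of the maximal product hypersurface H^k × H^{p−k} equals f(min(k,p−k)), and f(min(k,p−k)) = 0 if and only if min(k,p−k) = 1; moreover f(min(k,p−k)) < 0 for 2 ≤ min(k,p−k). -/
/-!
The larger of the two ratios `(p-k)/k` and `k/(p-k)` is the larger factor dimension over the
smaller one, `(p-m)/m` with `m = min k (p-k)`, and `-(p-1) + (p-m)/m = p(1-m)/m` has the sign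
of `1 - m`.
-/

lemma max_div_div_eq_max_div_min {a b : ℝ} (ha : 0 < a) (hb : 0 < b) :
    max (b / a) (a / b) = max a b / min a b := by
  rcases le_total a b with hab | hba
  · have : a / b ≤ b / a := by rw [div_le_div_iff₀ hb ha]; nlinarith
    rw [max_eq_left this, max_eq_right hab, min_eq_left hab]
  · have : b / a ≤ a / b := by rw [div_le_div_iff₀ ha hb]; nlinarith
    rw [max_eq_right this, max_eq_left hba, min_eq_right hba]

lemma neg_sub_one_add_sub_div_eq {n m : ℝ} (hm : m ≠ 0) :
    -(n - 1) + (n - m) / m = n * (1 - m) / m := by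
  field_simp
  ring

lemma neg_sub_one_add_sub_div_eq_zero_iff {n m : ℝ} (hn : n ≠ 0) (hm : m ≠ 0) :
    -(n - 1) + (n - m) / m = 0 ↔ m = 1 := by
  rw [neg_sub_one_add_sub_div_eq hm, div_eq_zero_iff, mul_eq_zero, sub_eq_zero]
  simp [hn, hm, eq_comm]

lemma neg_sub_one_add_sub_div_neg {n m : ℝ} (hn : 0 < n) (hm : 1 < m) :
    -(n - 1) + (n - m) / m < 0 := by
  rw [neg_sub_one_add_sub_div_eq (by positivity)]
  exact div_neg_of_neg_of_pos (mul_neg_of_pos_of_neg hn (by linarith)) (by positivity)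

theorem stmt_5_general (p k : ℕ) (hk : 1 ≤ k) (hkp : k ≤ p - 1)
    (f : ℕ → ℝ) (hf : ∀ m, f m = -((p : ℝ) - 1) + ((p : ℝ) - (m : ℝ)) / (m : ℝ)) :
    (-((p : ℝ) - 1) + max (((p : ℝ) - (k : ℝ)) / (k : ℝ)) ((k : ℝ) / ((p : ℝ) - (k : ℝ)))
        = f (min k (p - k))) ∧
    (f (min k (p - k)) = 0 ↔ min k (p - k) = 1) ∧
    (2 ≤ min k (p - k) → f (min k (p - k)) < 0) := by
  have hk_pos : (0 : ℝ) < k := by exact_mod_cast hk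
  have hpk_pos : (0 : ℝ) < (p : ℝ) - k := by
    have : (k : ℝ) < p := by exact_mod_cast (show k < p by omega)
    linarith
  have hp_pos : (0 : ℝ) < p := by linarith
  have hmin_cast : ((min k (p - k) : ℕ) : ℝ) = min (k : ℝ) ((p : ℝ) - k) := by
    push_cast [Nat.cast_sub (show k ≤ p by omega)]
    rfl
  have hmin_pos : (0 : ℝ) < min k (p - k) := by exact_mod_cast (show 0 < min k (p - k) by omega)
  refine ⟨?_, ?_, fun hm => ?_⟩
  · rw [hf, max_div_div_eq_max_div_min hk_pos hpk_pos, hmin_cast,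
      eq_sub_of_add_eq' (min_add_max (k : ℝ) ((p : ℝ) - k))]
    ring_nf
  · rw [hf, neg_sub_one_add_sub_div_eq_zero_iff hp_pos.ne' hmin_pos.ne', Nat.cast_eq_one]
  · rw [hf]
    exact neg_sub_one_add_sub_div_neg hp_pos (by exact_mod_cast hm)

/-- For `1 ≤ k ≤ p − 1`, with `f(m) = −(p−1) + (p−m)/m`, the maximum of the
Ricci curvature of the maximal product hypersurface `H^k × H^{p−k}` over unit vectors,
namely `−(p−1) + max((p−k)/k, k/(p−k))`, equals `f(min(k, p−k))`; this value vanishes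
iff `min(k, p−k) = 1`, and is negative whenever `2 ≤ min(k, p−k)`. -/
theorem stmt_5 (p k : ℕ) (hk : 1 ≤ k) (hkp : k ≤ p - 1) (hp : 2 ≤ p)
    (f : ℕ → ℝ) (hf : ∀ m, f m = -((p : ℝ) - 1) + ((p : ℝ) - (m : ℝ)) / (m : ℝ)) :
    (-((p : ℝ) - 1) + max (((p : ℝ) - (k : ℝ)) / (k : ℝ)) ((k : ℝ) / ((p : ℝ) - (k : ℝ)))
        = f (min k (p - k))) ∧
    (f (min k (p - k)) = 0 ↔ min k (p - k) = 1) ∧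
    (2 ≤ min k (p - k) → f (min k (p - k)) < 0) :=
  stmt_5_general p k hk hkp f hf
end

section
/- Let E → M be a Riemannian vector bundle with metric connection over a Riemannian manifold, and let α be a 1-form on M with values in E that is harmonic (Δα = 0 for the Hodge Laplacian). Then (1/2)Δ‖α‖² = ‖∇̄α‖² + ⟨S(α), α⟩, where S is the Weitzenböck curvature operator S(α)(X) = ∑ᵢ (R̄_{eᵢ,X}α)(eᵢ). -/
/-!
In a frame `eᵢ` that is parallel at the point, the Weitzenböck formula for an `E`-valued
1-form reads `S(α)(eⱼ) = (Δα)(eⱼ) + ∑ᵢ ∇ₑᵢ∇ₑᵢ(α(eⱼ))`, so for harmonic `α` the curvature term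
is the trace of the second covariant derivative. On the other hand, metric compatibility
applied twice gives `eᵢ(eᵢ‖α‖²) = 2‖∇ₑᵢα‖² + 2⟨∇ₑᵢ∇ₑᵢα, α⟩`, and summing over `i`
yields the Bochner formula.
-/

open Finset

section Weitzenboeck

variable {VF S : Type*} [AddCommGroup VF] [AddCommGroup S] {p : ℕ}

theorem covDeriv_apply_parallel_frame {nabla : VF → VF → VF} {D : VF → S → S}
    {e : Fin p → VF} (hpar : ∀ X i, nabla X (e i) = 0)
    {D1 : VF → (VF → S) → VF → S} (hD1 : ∀ X β Y, D1 X β Y = D X (β Y) - β (nabla X Y))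
    {β : VF → S} (hβ0 : β 0 = 0) (X : VF) (i : Fin p) :
    D1 X β (e i) = D X (β (e i)) := by
  rw [hD1, hpar, hβ0, sub_zero]

/-- The terms `D1 Y β 0` (junk, since `nabla Y 0` need not vanish) cancel between `S(β)` and
`Δβ`. -/
theorem curvatureOp_frame_eq_hodge_add_trace
    (nabla : VF → VF → VF) (D : VF → S → S)
    (hDadd : ∀ X, ∀ a b : S, D X (a + b) = D X a + D X b)
    (hD0 : ∀ s : S, D 0 s = 0)
    (e : Fin p → VF) (hpar : ∀ X i, nabla X (e i) = 0)
    (β : VF → S) (hβ0 : β 0 = 0)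
    (D1 : VF → (VF → S) → VF → S)
    (hD1 : ∀ X β Y, D1 X β Y = D X (β Y) - β (nabla X Y))
    (D2 : VF → (VF → VF → S) → VF → VF → S)
    (hD2 : ∀ X ω Y Z, D2 X ω Y Z = D X (ω Y Z) - ω (nabla X Y) Z - ω Y (nabla X Z))
    (dA : (VF → S) → VF → VF → S)
    (hdA : ∀ β X Y, dA β X Y = D1 X β Y - D1 Y β X)
    (codiff1 : (VF → S) → S)
    (hcodiff1 : ∀ β, codiff1 β = - ∑ i, D1 (e i) β (e i))
    (codiff2 : (VF → VF → S) → VF → S)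
    (hcodiff2 : ∀ ω X, codiff2 ω X = - ∑ i, D2 (e i) ω (e i) X)
    (hodge : (VF → S) → VF → S)
    (hhodge : ∀ β X, hodge β X = D X (codiff1 β) + codiff2 (dA β) X)
    (Rbar : VF → VF → (VF → S) → VF → S)
    (hRbar : ∀ X Y β, Rbar X Y β
      = fun Z => D1 X (D1 Y β) Z - D1 Y (D1 X β) Z - D1 (nabla X Y - nabla Y X) β Z)
    (Sop : (VF → S) → VF → S)
    (hSop : ∀ β X, Sop β X = ∑ i, Rbar (e i) X β (e i)) (j : Fin p) :
    Sop β (e j) = hodge β (e j) + ∑ i, D (e i) (D (e i) (β (e j))) := by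
  let DX : VF → S →+ S := fun X => AddMonoidHom.mk' (D X) (hDadd X)
  have hDsub (X : VF) (a b : S) : D X (a - b) = D X a - D X b := map_sub (DX X) a b
  have hDneg (X : VF) (a : S) : D X (-a) = -D X a := map_neg (DX X) a
  have hDsum (X : VF) (s : Fin p → S) : D X (∑ i, s i) = ∑ i, D X (s i) := map_sum (DX X) s _
  have hD1e := covDeriv_apply_parallel_frame hpar hD1 hβ0
  have hD1zero : ∀ i, D1 0 β (e i) = 0 := fun i => by rw [hD1e, hD0]
  simp only [hSop, hRbar, hhodge, hcodiff1, hcodiff2, hD2, hdA, hD1 _ (D1 _ β), hpar, sub_self,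
    hD1zero, hD1e, sub_zero, zero_sub, hDsub, hDneg, hDsum, sum_sub_distrib, sum_neg_distrib]
  abel

end Weitzenboeck

theorem der_der_metric_self {S R V : Type*} [Semiring R]
    {D : V → S → S} {g : S → S → R} (hgsymm : ∀ a b, g a b = g b a)
    {der : V → R → R} (hderadd : ∀ X f₁ f₂, der X (f₁ + f₂) = der X f₁ + der X f₂)
    (hmetric : ∀ X a b, der X (g a b) = g (D X a) b + g a (D X b)) (x : V) (a : S) :
    der x (der x (g a a)) = 2 * (g (D x a) (D x a) + g (D x (D x a)) a) := by
  rw [hmetric, hderadd, hmetric, hmetric, hgsymm a (D x (D x a))]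
  noncomm_ring

theorem laplacian_energy {S R V ι κ : Type*} [AddCommGroup S] [Ring R]
    [Fintype ι] [Fintype κ]
    {D : V → S → S} {g : S → S → R} (hgsymm : ∀ a b, g a b = g b a)
    (hgadd : ∀ a b c, g (a + b) c = g a c + g b c)
    {der : V → R → R} (hderadd : ∀ X f₁ f₂, der X (f₁ + f₂) = der X f₁ + der X f₂)
    (hmetric : ∀ X a b, der X (g a b) = g (D X a) b + g a (D X b)) (e : ι → V) (β : κ → S) :
    ∑ i, der (e i) (der (e i) (∑ j, g (β j) (β j)))
      = 2 * ((∑ i, ∑ j, g (D (e i) (β j)) (D (e i) (β j)))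
        + ∑ j, g (∑ i, D (e i) (D (e i) (β j))) (β j)) := by
  let derX : V → R →+ R := fun x => AddMonoidHom.mk' (der x) (hderadd x)
  let gL : S → S →+ R := fun b => AddMonoidHom.mk' (g · b) (hgadd · · b)
  have hdersum (x : V) (f : κ → R) : der x (∑ j, f j) = ∑ j, der x (f j) := map_sum (derX x) f _
  have hgsum (s : ι → S) (b : S) : g (∑ i, s i) b = ∑ i, g (s i) b := map_sum (gL b) s _
  simp only [hdersum, der_der_metric_self hgsymm hderadd hmetric, hgsum, ← mul_sum,
    sum_add_distrib]
  rw [sum_comm (s := (univ : Finset κ))]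

theorem stmt_8_general {VF S R : Type*} [AddCommGroup VF] [AddCommGroup S] [CommRing R]
    {p : ℕ}
    (nabla : VF → VF → VF)
    (D : VF → S → S)
    (hDadd : ∀ X, ∀ a b : S, D X (a + b) = D X a + D X b)
    (hD0 : ∀ s : S, D 0 s = 0)
    (e : Fin p → VF) (hpar : ∀ X i, nabla X (e i) = 0)
    -- fiber metric and its compatibility with the connection
    (g : S → S → R) (hgsymm : ∀ a b, g a b = g b a)
    (hgadd : ∀ a b c, g (a + b) c = g a c + g b c)
    (der : VF → R → R) (hderadd : ∀ X f₁ f₂, der X (f₁ + f₂) = der X f₁ + der X f₂)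
    (hmetric : ∀ X a b, der X (g a b) = g (D X a) b + g a (D X b))
    -- the 1-form α
    (α : VF → S) (hαadd : ∀ a b : VF, α (a + b) = α a + α b)
    -- induced connection on 1- and 2-forms, exterior derivative and codifferentials
    (D1 : VF → (VF → S) → VF → S)
    (hD1 : ∀ X β Y, D1 X β Y = D X (β Y) - β (nabla X Y))
    (D2 : VF → (VF → VF → S) → VF → VF → S)
    (hD2 : ∀ X ω Y Z, D2 X ω Y Z = D X (ω Y Z) - ω (nabla X Y) Z - ω Y (nabla X Z))
    (dA : (VF → S) → VF → VF → S)
    (hdA : ∀ β X Y, dA β X Y = D1 X β Y - D1 Y β X)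
    (codiff1 : (VF → S) → S)
    (hcodiff1 : ∀ β, codiff1 β = - ∑ i, D1 (e i) β (e i))
    (codiff2 : (VF → VF → S) → VF → S)
    (hcodiff2 : ∀ ω X, codiff2 ω X = - ∑ i, D2 (e i) ω (e i) X)
    (hodge : (VF → S) → VF → S)
    (hhodge : ∀ β X, hodge β X = D X (codiff1 β) + codiff2 (dA β) X)
    (Rbar : VF → VF → (VF → S) → VF → S)
    (hRbar : ∀ X Y β, Rbar X Y β
      = fun Z => D1 X (D1 Y β) Z - D1 Y (D1 X β) Z - D1 (nabla X Y - nabla Y X) β Z)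
    (Sop : (VF → S) → VF → S)
    (hSop : ∀ β X, Sop β X = ∑ i, Rbar (e i) X β (e i))
    -- α is harmonic
    (hharmonic : ∀ X, hodge α X = 0) :
    ∑ i, der (e i) (der (e i) (∑ j, g (α (e j)) (α (e j))))
      = 2 * ((∑ i, ∑ j, g (D1 (e i) α (e j)) (D1 (e i) α (e j)))
             + ∑ j, g (Sop α (e j)) (α (e j))) := by
  have hα0 : α 0 = 0 := (AddMonoidHom.mk' α hαadd).map_zero
  have hSα (j : Fin p) : Sop α (e j) = ∑ i, D (e i) (D (e i) (α (e j))) := by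
    rw [curvatureOp_frame_eq_hodge_add_trace nabla D hDadd hD0 e hpar α hα0 D1 hD1 D2 hD2 dA hdA
      codiff1 hcodiff1 codiff2 hcodiff2 hodge hhodge Rbar hRbar Sop hSop, hharmonic, zero_add]
  simp only [covDeriv_apply_parallel_frame hpar hD1 hα0, hSα]
  exact laplacian_energy hgsymm hgadd hderadd hmetric e (fun j => α (e j))

/-- Bochner formula. For a harmonic 1-form `α` with values in a Riemannian
vector bundle `E` with metric connection, `(1/2)Δ‖α‖² = ‖∇̄α‖² + ⟨S(α),α⟩`, stated as
`Δ‖α‖² = 2(‖∇̄α‖² + ⟨S(α),α⟩)`. Formalized in the pointwise algebraic model: `VF` are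
vector fields with Levi-Civita connection `nabla` and an orthonormal frame `e` parallel
at the point, `S` the sections of `E` with metric connection `D` and fiber metric `g`
valued in the ring `R` of functions, on which vector fields act by the derivation `der`;
`Δ` on functions is `∑ᵢ eᵢ·(eᵢ·f)` in the parallel frame, and the Hodge Laplacian,
curvature operator `S(α)` and induced connection `D1` on 1-forms are as in the
Weitzenböck setup. -/
theorem stmt_8 {VF S R : Type*} [AddCommGroup VF] [AddCommGroup S] [CommRing R]
    {p : ℕ}
    (nabla : VF → VF → VF) (hnabla0 : ∀ Y, nabla 0 Y = 0)
    (D : VF → S → S)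
    (hDadd : ∀ X, ∀ a b : S, D X (a + b) = D X a + D X b)
    (hD0 : ∀ s : S, D 0 s = 0)
    (e : Fin p → VF) (hpar : ∀ X i, nabla X (e i) = 0)
    -- fiber metric and its compatibility with the connection
    (g : S → S → R) (hgsymm : ∀ a b, g a b = g b a)
    (hgadd : ∀ a b c, g (a + b) c = g a c + g b c)
    (der : VF → R → R) (hderadd : ∀ X f₁ f₂, der X (f₁ + f₂) = der X f₁ + der X f₂)
    (hmetric : ∀ X a b, der X (g a b) = g (D X a) b + g a (D X b))
    -- the 1-form α
    (α : VF → S) (hαadd : ∀ a b : VF, α (a + b) = α a + α b)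
    -- induced connection on 1- and 2-forms, exterior derivative and codifferentials
    (D1 : VF → (VF → S) → VF → S)
    (hD1 : ∀ X β Y, D1 X β Y = D X (β Y) - β (nabla X Y))
    (D2 : VF → (VF → VF → S) → VF → VF → S)
    (hD2 : ∀ X ω Y Z, D2 X ω Y Z = D X (ω Y Z) - ω (nabla X Y) Z - ω Y (nabla X Z))
    (dA : (VF → S) → VF → VF → S)
    (hdA : ∀ β X Y, dA β X Y = D1 X β Y - D1 Y β X)
    (codiff1 : (VF → S) → S)
    (hcodiff1 : ∀ β, codiff1 β = - ∑ i, D1 (e i) β (e i))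
    (codiff2 : (VF → VF → S) → VF → S)
    (hcodiff2 : ∀ ω X, codiff2 ω X = - ∑ i, D2 (e i) ω (e i) X)
    (hodge : (VF → S) → VF → S)
    (hhodge : ∀ β X, hodge β X = D X (codiff1 β) + codiff2 (dA β) X)
    (Rbar : VF → VF → (VF → S) → VF → S)
    (hRbar : ∀ X Y β, Rbar X Y β
      = fun Z => D1 X (D1 Y β) Z - D1 Y (D1 X β) Z - D1 (nabla X Y - nabla Y X) β Z)
    (Sop : (VF → S) → VF → S)
    (hSop : ∀ β X, Sop β X = ∑ i, Rbar (e i) X β (e i))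
    -- α is harmonic
    (hharmonic : ∀ X, hodge α X = 0) :
    ∑ i, der (e i) (der (e i) (∑ j, g (α (e j)) (α (e j))))
      = 2 * ((∑ i, ∑ j, g (D1 (e i) α (e j)) (D1 (e i) α (e j)))
             + ∑ j, g (Sop α (e j)) (α (e j))) :=
  stmt_8_general nabla D hDadd hD0 e hpar g hgsymm hgadd der hderadd hmetric α hαadd D1 hD1 D2 hD2
    dA hdA codiff1 hcodiff1 codiff2 hcodiff2 hodge hhodge Rbar hRbar Sop hSop hharmonic
end
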